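/- arXiv:2505.06204 — 2 statements merged into one kernel-verified Lean document; each statement's English description precedes it below -/
import Mathlib

section
/- Let f : ℝⁿ × ℝᵐ → ℝⁿ be affine in the control: f(x,u) = f₀(x) + Σᵢ fᵢ(x)uᵢ, where each fᵢ is k-Lipschitz and has linear growth with constant c. Let u, v : [t₀,T] → ℝᵐ be measurable controls bounded by M, and let x_u, x_v solve the corresponding integral equations with the same initial condition x₀. Then sup_{t∈[t₀,T]} |x_u(t) − x_v(t)| ≤ C · ‖u − v‖_{L²(t₀,T)}, where C depends only on k, c, M, T − t₀, and |x₀|. In particular, the map u ↦ x_u is continuous from L²(t₀,T;ℝᵐ) (restricted to controls bounded by M) into C([t₀,T];ℝⁿ) with the sup norm. -/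
open MeasureTheory intervalIntegral Set

/-!
With `a = c (1 + m M)`, the linear growth bound and Grönwall's inequality keep every trajectory in
the ball of radius `B = (‖x₀‖ + a L) e^{a L}`, `L = T - t₀`. On that ball the vector field is
`k (1 + m M)`-Lipschitz in the state and `m c (1 + B)`-Lipschitz in the control, so Grönwall again
bounds `‖x_u - x_v‖` by `m c (1 + B) e^{k (1 + m M) L} ‖u - v‖_{L¹}`, and Cauchy–Schwarz gives
`‖u - v‖_{L¹} ≤ √L ‖u - v‖_{L²}`.
-/

theorem add_mul_gronwallBound_zero (A K x : ℝ) :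
    A + K * gronwallBound 0 K A x = A * Real.exp (K * x) := by
  rcases eq_or_ne K 0 with rfl | hK
  · simp [gronwallBound_K0]
  · rw [gronwallBound_of_K_ne_0 hK]
    field_simp
    ring

theorem le_mul_exp_of_le_add_mul_integral {g : ℝ → ℝ} {a b A K : ℝ} (hK : 0 ≤ K)
    (hg : ContinuousOn g (Icc a b)) (hle : ∀ t ∈ Icc a b, g t ≤ A + K * ∫ s in a..t, g s) :
    ∀ t ∈ Icc a b, g t ≤ A * Real.exp (K * (t - a)) := by
  rcases lt_or_ge b a with hba | hab
  · simp [Icc_eq_empty_of_lt hba]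
  -- a continuous extension of `g` to `ℝ`, so that `t ↦ ∫ s in a..t, g' s` is differentiable
  set g' : ℝ → ℝ := fun t => g (projIcc a b hab t)
  have hg' : Continuous g' :=
    hg.comp_continuous continuous_projIcc.subtype_val fun t => (projIcc a b hab t).2
  have hgg' : EqOn g' g (Icc a b) := fun t ht => by simp [g', projIcc_of_mem hab ht]
  have hint : ∀ t ∈ Icc a b, ∫ s in a..t, g' s = ∫ s in a..t, g s := fun t ht =>
    integral_congr (hgg'.mono (uIcc_subset_Icc (left_mem_Icc.2 hab) ht))
  have hG : ∀ t, HasDerivAt (fun t => ∫ s in a..t, g' s) (g' t) t := fun t =>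
    hg'.integral_hasStrictDerivAt a t |>.hasDerivAt
  have hbound := le_gronwallBound_of_liminf_deriv_right_le (a := a) (b := b)
    (δ := 0) (K := K) (ε := A) (fun t _ => (hG t).continuousAt.continuousWithinAt)
    (fun t _ _ hr => (hG t).hasDerivWithinAt.liminf_right_slope_le hr) (by simp)
    (fun t ht => by
      rw [hgg' (Ico_subset_Icc_self ht), hint t (Ico_subset_Icc_self ht)]
      linarith [hle t (Ico_subset_Icc_self ht)])
  intro t ht
  calc g t ≤ A + K * ∫ s in a..t, g s := hle t ht
    _ ≤ A + K * gronwallBound 0 K A (t - a) := by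
      rw [← hint t ht]; gcongr; exact hbound t ht
    _ = A * Real.exp (K * (t - a)) := add_mul_gronwallBound_zero A K _

theorem integral_le_sqrt_measureReal_univ_mul_sqrt_integral_sq {α : Type*} [MeasurableSpace α]
    {μ : Measure α} [IsFiniteMeasure μ] {φ : α → ℝ} (hφ : MemLp φ 2 μ) :
    ∫ x, φ x ∂μ ≤ √(μ.real univ) * √(∫ x, φ x ^ 2 ∂μ) := by
  have hφ' : MemLp φ (ENNReal.ofReal 2) μ := by simpa using hφ
  have hone : MemLp (fun _ => (1 : ℝ)) (ENNReal.ofReal 2) μ := memLp_const 1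
  calc ∫ x, φ x ∂μ ≤ ∫ x, ‖(1 : ℝ)‖ * ‖φ x‖ ∂μ :=
        integral_mono (hφ.integrable one_le_two) (by simpa using (hφ.integrable one_le_two).norm)
          fun x => by simpa using le_abs_self (φ x)
    _ ≤ (∫ _, ‖(1 : ℝ)‖ ^ (2 : ℝ) ∂μ) ^ (1 / 2 : ℝ) * (∫ x, ‖φ x‖ ^ (2 : ℝ) ∂μ) ^ (1 / 2 : ℝ) :=
        integral_mul_norm_le_Lp_mul_Lq Real.HolderConjugate.two_two hone hφ'
    _ = √(μ.real univ) * √(∫ x, φ x ^ 2 ∂μ) := by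
        simp [Real.sqrt_eq_rpow]

theorem intervalIntegral_le_sqrt_mul_sqrt_integral_sq {φ : ℝ → ℝ} {a b : ℝ} (hab : a ≤ b)
    (hφ : MemLp φ 2 (volume.restrict (Ioc a b))) :
    ∫ s in a..b, φ s ≤ √(b - a) * √(∫ s in a..b, φ s ^ 2) := by
  simpa [integral_of_le hab, hab] using integral_le_sqrt_measureReal_univ_mul_sqrt_integral_sq hφ

section ControlAffine

variable {E : Type*} [NormedAddCommGroup E] [NormedSpace ℝ E] {m : ℕ} {f : Fin (m + 1) → E → E}
  {k c : ℝ}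

def controlAffineField (f : Fin (m + 1) → E → E) (w : Fin m → ℝ) (x : E) : E :=
  f 0 x + ∑ i, w i • f i.succ x

theorem norm_sum_smul_le {a : Fin m → ℝ} {v : Fin m → E} {R : ℝ} (hv : ∀ i, ‖v i‖ ≤ R) :
    ‖∑ i, a i • v i‖ ≤ m * ‖a‖ * R := by
  calc ‖∑ i, a i • v i‖ ≤ ∑ _i : Fin m, ‖a‖ * R := norm_sum_le_of_le _ fun i _ => by
        rw [norm_smul]
        exact mul_le_mul (norm_le_pi_norm a i) (hv i) (norm_nonneg _) (norm_nonneg _)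
    _ = m * ‖a‖ * R := by simp [mul_assoc]

theorem norm_controlAffineField_le (hgrowth : ∀ i x, ‖f i x‖ ≤ c * (1 + ‖x‖))
    (w : Fin m → ℝ) (x : E) :
    ‖controlAffineField f w x‖ ≤ c * (1 + m * ‖w‖) * (1 + ‖x‖) := by
  calc ‖controlAffineField f w x‖ ≤ c * (1 + ‖x‖) + m * ‖w‖ * (c * (1 + ‖x‖)) :=
        norm_add_le_of_le (hgrowth 0 x) (norm_sum_smul_le fun i => hgrowth i.succ x)
    _ = c * (1 + m * ‖w‖) * (1 + ‖x‖) := by ring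

theorem norm_controlAffineField_sub_state_le (hLip : ∀ i x x', ‖f i x - f i x'‖ ≤ k * ‖x - x'‖)
    (w : Fin m → ℝ) (x y : E) :
    ‖controlAffineField f w x - controlAffineField f w y‖ ≤ k * (1 + m * ‖w‖) * ‖x - y‖ := by
  have hsplit : controlAffineField f w x - controlAffineField f w y =
      (f 0 x - f 0 y) + ∑ i, w i • (f i.succ x - f i.succ y) := by
    simp only [controlAffineField, smul_sub, Finset.sum_sub_distrib]; abel
  calc ‖controlAffineField f w x - controlAffineField f w y‖
      ≤ k * ‖x - y‖ + m * ‖w‖ * (k * ‖x - y‖) := by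
        rw [hsplit]
        exact norm_add_le_of_le (hLip 0 x y) (norm_sum_smul_le fun i => hLip i.succ x y)
    _ = k * (1 + m * ‖w‖) * ‖x - y‖ := by ring

theorem norm_controlAffineField_sub_control_le (hgrowth : ∀ i x, ‖f i x‖ ≤ c * (1 + ‖x‖))
    (w w' : Fin m → ℝ) (x : E) :
    ‖controlAffineField f w x - controlAffineField f w' x‖ ≤ m * ‖w - w'‖ * (c * (1 + ‖x‖)) := by
  have hsplit : controlAffineField f w x - controlAffineField f w' x =
      ∑ i, (w - w') i • f i.succ x := by
    simp only [controlAffineField, Pi.sub_apply, sub_smul, Finset.sum_sub_distrib]; abel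
  rw [hsplit]
  exact norm_sum_smul_le fun i => hgrowth i.succ x

theorem continuous_controlAffineField (hf : ∀ i, Continuous (f i)) :
    Continuous fun p : (Fin m → ℝ) × E => controlAffineField f p.1 p.2 := by
  unfold controlAffineField
  fun_prop

theorem integrableOn_controlAffineField {w : ℝ → Fin m → ℝ} {x : ℝ → E} {a b M : ℝ}
    (hf : ∀ i, Continuous (f i)) (hgrowth : ∀ i x, ‖f i x‖ ≤ c * (1 + ‖x‖)) (hc : 0 ≤ c)
    (hw : Measurable w) (hwM : ∀ t, ‖w t‖ ≤ M) (hx : ContinuousOn x (Icc a b)) :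
    IntegrableOn (fun t => controlAffineField f (w t) (x t)) (Icc a b) := by
  have hbound : IntegrableOn (fun t => c * (1 + m * M) * (1 + ‖x t‖)) (Icc a b) :=
    (continuousOn_const.mul (continuousOn_const.add hx.norm)).integrableOn_Icc
  refine hbound.mono' ?_ (ae_of_all _ fun t => ?_)
  · exact (continuous_controlAffineField hf).comp_aestronglyMeasurable
      (hw.aestronglyMeasurable.prodMk (hx.aestronglyMeasurable measurableSet_Icc))
  · refine (norm_controlAffineField_le hgrowth _ _).trans ?_
    gcongr
    exact hwM t

theorem norm_sub_le_of_integral_eq {x y F G : ℝ → E} {φ : ℝ → ℝ} {x₀ y₀ : E} {a b K : ℝ}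
    (hK : 0 ≤ K) (hx : ContinuousOn x (Icc a b)) (hy : ContinuousOn y (Icc a b))
    (hF : IntegrableOn F (Icc a b)) (hG : IntegrableOn G (Icc a b))
    (hφ : IntegrableOn φ (Icc a b)) (hφ0 : ∀ s ∈ Icc a b, 0 ≤ φ s)
    (hxF : ∀ t ∈ Icc a b, x t = x₀ + ∫ s in a..t, F s)
    (hyG : ∀ t ∈ Icc a b, y t = y₀ + ∫ s in a..t, G s)
    (hFG : ∀ s ∈ Icc a b, ‖F s - G s‖ ≤ K * ‖x s - y s‖ + φ s) :
    ∀ t ∈ Icc a b, ‖x t - y t‖ ≤ (‖x₀ - y₀‖ + ∫ s in a..b, φ s) * Real.exp (K * (b - a)) := by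
  have hgap : ContinuousOn (fun s => ‖x s - y s‖) (Icc a b) := (hx.sub hy).norm
  have hsub : ∀ t ∈ Icc a b, uIcc a t ⊆ Icc a b := fun t ht => by
    rw [uIcc_of_le ht.1]; exact Icc_subset_Icc_right ht.2
  have hle : ∀ t ∈ Icc a b,
      ‖x t - y t‖ ≤ ‖x₀ - y₀‖ + (∫ s in a..b, φ s) + K * ∫ s in a..t, ‖x s - y s‖ := by
    intro t ht
    have hint : ∀ {H : ℝ → ℝ}, IntegrableOn H (Icc a b) → IntervalIntegrable H volume a t :=
      fun h => (h.mono_set (hsub t ht)).intervalIntegrable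
    have hgap_int : IntervalIntegrable (fun s => K * ‖x s - y s‖) volume a t :=
      ((continuousOn_const.mul hgap).mono (hsub t ht)).intervalIntegrable
    have hφ_le : ∫ s in a..t, φ s ≤ ∫ s in a..b, φ s :=
      integral_mono_interval le_rfl ht.1 ht.2
        (ae_restrict_of_forall_mem measurableSet_Ioc fun s hs => hφ0 s ⟨hs.1.le, hs.2⟩)
        (hφ.mono_set (hsub b ⟨ht.1.trans ht.2, le_rfl⟩)).intervalIntegrable
    calc ‖x t - y t‖ = ‖(x₀ - y₀) + ∫ s in a..t, (F s - G s)‖ := by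
          rw [hxF t ht, hyG t ht, integral_sub ((hF.mono_set (hsub t ht)).intervalIntegrable)
            ((hG.mono_set (hsub t ht)).intervalIntegrable)]
          abel_nf
      _ ≤ ‖x₀ - y₀‖ + ∫ s in a..t, (K * ‖x s - y s‖ + φ s) :=
          norm_add_le_of_le le_rfl <| norm_integral_le_of_norm_le ht.1
            (ae_of_all _ fun s hs => hFG s ⟨hs.1.le, hs.2.trans ht.2⟩) (hgap_int.add (hint hφ))
      _ = ‖x₀ - y₀‖ + (∫ s in a..t, φ s) + K * ∫ s in a..t, ‖x s - y s‖ := by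
          rw [integral_add hgap_int (hint hφ), intervalIntegral.integral_const_mul]; ring
      _ ≤ ‖x₀ - y₀‖ + (∫ s in a..b, φ s) + K * ∫ s in a..t, ‖x s - y s‖ := by gcongr
  intro t ht
  refine (le_mul_exp_of_le_add_mul_integral hK hgap hle t ht).trans ?_
  have hA : 0 ≤ ‖x₀ - y₀‖ + ∫ s in a..b, φ s := add_nonneg (norm_nonneg _)
    (integral_nonneg (ht.1.trans ht.2) fun s hs => hφ0 s hs)
  gcongr
  exact ht.2

theorem norm_trajectory_le {w : ℝ → Fin m → ℝ} {x : ℝ → E} {x₀ : E} {a b M : ℝ}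
    (hf : ∀ i, Continuous (f i)) (hgrowth : ∀ i x, ‖f i x‖ ≤ c * (1 + ‖x‖)) (hc : 0 ≤ c)
    (hw : Measurable w) (hwM : ∀ t, ‖w t‖ ≤ M) (hx : ContinuousOn x (Icc a b))
    (hxeq : ∀ t ∈ Icc a b, x t = x₀ + ∫ s in a..t, controlAffineField f (w s) (x s)) :
    ∀ t ∈ Icc a b,
      ‖x t‖ ≤ (‖x₀‖ + (b - a) * (c * (1 + m * M))) * Real.exp (c * (1 + m * M) * (b - a)) := by
  have hM : 0 ≤ M := (norm_nonneg _).trans (hwM a)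
  have hbound := norm_sub_le_of_integral_eq (y := 0) (G := 0) (y₀ := 0)
    (φ := fun _ => c * (1 + m * M)) (K := c * (1 + m * M)) (by positivity) hx continuousOn_const
    (integrableOn_controlAffineField hf hgrowth hc hw hwM hx) integrableOn_zero
    (integrableOn_const measure_Icc_lt_top.ne)
    (fun _ _ => by positivity) hxeq (by simp) fun s _ => calc
      ‖controlAffineField f (w s) (x s) - 0‖ ≤ c * (1 + m * ‖w s‖) * (1 + ‖x s‖) := by
        simpa using norm_controlAffineField_le hgrowth (w s) (x s)
      _ ≤ c * (1 + m * M) * (1 + ‖x s‖) := by gcongr; exact hwM s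
      _ = c * (1 + m * M) * ‖x s - 0‖ + c * (1 + m * M) := by simp; ring
  simpa only [Pi.zero_apply, sub_zero, intervalIntegral.integral_const, smul_eq_mul] using hbound

theorem norm_trajectory_sub_le {w w' : ℝ → Fin m → ℝ} {x y : ℝ → E} {x₀ : E} {a b M B : ℝ}
    (hf : ∀ i, Continuous (f i)) (hLip : ∀ i x x', ‖f i x - f i x'‖ ≤ k * ‖x - x'‖)
    (hgrowth : ∀ i x, ‖f i x‖ ≤ c * (1 + ‖x‖)) (hk : 0 ≤ k) (hc : 0 ≤ c)
    (hw : Measurable w) (hw' : Measurable w') (hwM : ∀ t, ‖w t‖ ≤ M) (hw'M : ∀ t, ‖w' t‖ ≤ M)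
    (hx : ContinuousOn x (Icc a b)) (hy : ContinuousOn y (Icc a b))
    (hxeq : ∀ t ∈ Icc a b, x t = x₀ + ∫ s in a..t, controlAffineField f (w s) (x s))
    (hyeq : ∀ t ∈ Icc a b, y t = x₀ + ∫ s in a..t, controlAffineField f (w' s) (y s))
    (hyB : ∀ t ∈ Icc a b, ‖y t‖ ≤ B) :
    ∀ t ∈ Icc a b, ‖x t - y t‖ ≤
      m * c * (1 + B) * (∫ s in a..b, ‖w s - w' s‖) * Real.exp (k * (1 + m * M) * (b - a)) := by
  have hM : 0 ≤ M := (norm_nonneg _).trans (hwM a)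
  have hcontrol_gap : IntegrableOn (fun s => m * c * (1 + B) * ‖w s - w' s‖) (Icc a b) := by
    refine Measure.integrableOn_of_bounded measure_Icc_lt_top.ne
      ((hw.sub hw').norm.const_mul _).aestronglyMeasurable (M := |m * c * (1 + B)| * (M + M))
      (ae_of_all _ fun s => ?_)
    rw [norm_mul, norm_norm, Real.norm_eq_abs]
    gcongr
    exact norm_sub_le_of_le (hwM s) (hw'M s)
  have hbound := norm_sub_le_of_integral_eq (K := k * (1 + m * M)) (by positivity) hx hy
    (integrableOn_controlAffineField hf hgrowth hc hw hwM hx)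
    (integrableOn_controlAffineField hf hgrowth hc hw' hw'M hy) hcontrol_gap
    (fun s hs => by have := (norm_nonneg _).trans (hyB s hs); positivity) hxeq hyeq
    fun s hs => calc
      _ ≤ ‖controlAffineField f (w s) (x s) - controlAffineField f (w s) (y s)‖
          + ‖controlAffineField f (w s) (y s) - controlAffineField f (w' s) (y s)‖ :=
        norm_sub_le_norm_sub_add_norm_sub _ _ _
      _ ≤ k * (1 + m * ‖w s‖) * ‖x s - y s‖ + m * ‖w s - w' s‖ * (c * (1 + ‖y s‖)) :=
        add_le_add (norm_controlAffineField_sub_state_le hLip _ _ _)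
          (norm_controlAffineField_sub_control_le hgrowth _ _ _)
      _ ≤ k * (1 + m * M) * ‖x s - y s‖ + m * c * (1 + B) * ‖w s - w' s‖ := by
        have hys := hyB s hs
        have hws := hwM s
        gcongr ?_ + ?_
        · gcongr
        · rw [mul_assoc, mul_comm _ (c * _), ← mul_assoc, ← mul_assoc]; gcongr
  simpa [intervalIntegral.integral_const_mul] using hbound

end ControlAffine

/-- the control-to-trajectory map is Lipschitz from `L²` (controls bounded
by `M`) into `C([t₀,T];ℝⁿ)`, with a constant depending only on `k, c, M, T − t₀, |x₀|`. -/
theorem stmt2 {n m : ℕ}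
    (f : Fin (m + 1) → EuclideanSpace ℝ (Fin n) → EuclideanSpace ℝ (Fin n))
    (k c M : ℝ) (hk : 0 < k) (hc : 0 < c) (hM : 0 < M)
    (hLip : ∀ i x x', ‖f i x - f i x'‖ ≤ k * ‖x - x'‖)
    (hgrowth : ∀ i x, ‖f i x‖ ≤ c * (1 + ‖x‖))
    (t₀ T : ℝ) (ht : t₀ ≤ T) (x₀ : EuclideanSpace ℝ (Fin n)) :
    ∃ C : ℝ, 0 < C ∧
      ∀ (u v : ℝ → Fin m → ℝ) (xu xv : ℝ → EuclideanSpace ℝ (Fin n)),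
        Measurable u → Measurable v →
        (∀ t i, |u t i| ≤ M) → (∀ t i, |v t i| ≤ M) →
        ContinuousOn xu (Set.Icc t₀ T) → ContinuousOn xv (Set.Icc t₀ T) →
        (∀ t ∈ Set.Icc t₀ T,
          xu t = x₀ + ∫ σ in t₀..t, (f 0 (xu σ) + ∑ i : Fin m, u σ i • f i.succ (xu σ))) →
        (∀ t ∈ Set.Icc t₀ T,
          xv t = x₀ + ∫ σ in t₀..t, (f 0 (xv σ) + ∑ i : Fin m, v σ i • f i.succ (xv σ))) →
        ∀ t ∈ Set.Icc t₀ T,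
          ‖xu t - xv t‖ ≤ C * Real.sqrt (∫ σ in t₀..T, ‖(u σ - v σ : Fin m → ℝ)‖ ^ 2) := by
  have hf : ∀ i, Continuous (f i) := fun i =>
    (LipschitzWith.of_dist_le' fun x x' => by
      simpa only [dist_eq_norm] using hLip i x x').continuous
  have hnorm : ∀ w : ℝ → Fin m → ℝ, (∀ t i, |w t i| ≤ M) → ∀ t, ‖w t‖ ≤ M := fun w hw t =>
    (pi_norm_le_iff_of_nonneg hM.le).2 fun i => (Real.norm_eq_abs _).trans_le (hw t i)
  set B := (‖x₀‖ + (T - t₀) * (c * (1 + m * M))) * Real.exp (c * (1 + m * M) * (T - t₀))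
  set D := m * c * (1 + B)
  set R := Real.exp (k * (1 + m * M) * (T - t₀))
  refine ⟨D * √(T - t₀) * R + 1, by positivity, ?_⟩
  intro u v xu xv hu hv huM hvM hxu hxv hequ heqv t htI
  have hvB := norm_trajectory_le hf hgrowth hc.le hv (hnorm v hvM) hxv heqv
  have hL1 := norm_trajectory_sub_le hf hLip hgrowth hk.le hc.le hu hv (hnorm u huM) (hnorm v hvM)
    hxu hxv hequ heqv hvB t htI
  have hL2 : ∫ s in t₀..T, ‖u s - v s‖ ≤ √(T - t₀) * √(∫ s in t₀..T, ‖u s - v s‖ ^ 2) :=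
    intervalIntegral_le_sqrt_mul_sqrt_integral_sq ht <|
      MemLp.of_bound (hu.sub hv).norm.aestronglyMeasurable (M + M) <| ae_of_all _ fun s => by
        simpa using norm_sub_le_of_le (hnorm u huM s) (hnorm v hvM s)
  calc ‖xu t - xv t‖ ≤ D * (∫ s in t₀..T, ‖u s - v s‖) * R := hL1
    _ ≤ D * (√(T - t₀) * √(∫ s in t₀..T, ‖u s - v s‖ ^ 2)) * R := by gcongr
    _ ≤ (D * √(T - t₀) * R + 1) * √(∫ s in t₀..T, ‖u s - v s‖ ^ 2) := by
      nlinarith [Real.sqrt_nonneg (∫ s in t₀..T, ‖u s - v s‖ ^ 2)]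
end

section
/- Let (Ω,𝒜,μ) be a probability space and g : ℝⁿ × Ω → ℝⁿ → ℝ be measurable, bounded by M, Lipschitz in x with constant k_g (uniformly in ω), such that g(·,ω) is differentiable for each ω with ∇_x g jointly continuous in x. Then the reduced cost functional 𝒥 : L²(μ,Ω;ℝⁿ) → ℝ, 𝒥(φ) = ∫_Ω g(φ(ω),ω) dμ(ω), is Fréchet differentiable at every φ, with derivative D𝒥(φ)ψ = ∫_Ω ∇_x g(φ(ω),ω) · ψ(ω) dμ(ω); i.e., the Riesz representative of D𝒥(φ) is the function ω ↦ ∇_x g(φ(ω),ω), which belongs to L²(μ,Ω;ℝⁿ). -/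
/-!
Write `r_ω(v) = g(φ ω + v, ω) - g(φ ω, ω) - ⟪∇g(φ ω, ω), v⟫`, so that
`𝒥(φ + d) - 𝒥(φ) - ⟪G, d⟫ = ∫ r_ω(d ω) dμ`. The Lipschitz bound gives `|r_ω(v)| ≤ 2k‖v‖` and
differentiability gives `r_ω(v) = o(‖v‖)` for each `ω`. With the local slope
`m_δ(ω) = sup_{0 < ‖v‖ < δ} |r_ω(v)| / ‖v‖` one has `|r_ω(v)| ≤ m_δ(ω)‖v‖ + (2k/δ)‖v‖²`, hence by
Cauchy–Schwarz `|∫ r_ω(d ω)| ≤ ‖m_δ‖₂ ‖d‖ + (2k/δ)‖d‖²`, and `‖m_δ‖₂ → 0` as `δ → 0` by dominated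
convergence. Since `r_ω` is continuous, `m_δ` is a supremum over a countable dense set and hence
measurable; the gradient is measurable as a limit of difference quotients.
-/

open MeasureTheory Filter Topology Asymptotics
open scoped NNReal InnerProductSpace

section Measurability

variable {Ω : Type*} [MeasurableSpace Ω]

theorem measurable_iSup_of_continuous {X : Type*} [TopologicalSpace X]
    [TopologicalSpace.SeparableSpace X] {F : Ω → X → ℝ} (hcont : ∀ ω, Continuous (F ω))
    (hmeas : ∀ x, Measurable fun ω => F ω x) : Measurable fun ω => ⨆ x, F ω x := by
  obtain ⟨S, hS_count, hS_dense⟩ := TopologicalSpace.exists_countable_dense X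
  have : Countable S := hS_count.to_subtype
  simp_rw [← hS_dense.ciSup' (hcont _)]
  exact Measurable.iSup fun s => hmeas s

variable {E : Type*} [NormedAddCommGroup E] [InnerProductSpace ℝ E] [MeasurableSpace E]
  [BorelSpace E]

theorem measurable_inner_of_hasGradientAt [CompleteSpace E] {f : E → Ω → ℝ}
    (hf : Measurable (Function.uncurry f)) {x : Ω → E} (hx : Measurable x) {D : Ω → E}
    (hD : ∀ ω, HasGradientAt (f · ω) (D ω) (x ω)) (v : E) : Measurable fun ω => ⟪D ω, v⟫_ℝ := by
  refine measurable_of_tendsto_metrizable' (𝓝[≠] (0 : ℝ))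
    (f := fun t ω => t⁻¹ • (f (x ω + t • v) ω - f (x ω) ω)) (fun t => ?_)
    (tendsto_pi_nhds.2 fun ω => ((hD ω).hasFDerivAt.hasLineDerivAt v).tendsto_slope_zero)
  exact ((hf.comp ((hx.add_const (t • v)).prodMk measurable_id)).sub
    (hf.comp (hx.prodMk measurable_id))).const_smul t⁻¹

theorem measurable_of_measurable_inner [FiniteDimensional ℝ E] {D : Ω → E}
    (h : ∀ v, Measurable fun ω => ⟪D ω, v⟫_ℝ) : Measurable D := by
  let b := stdOrthonormalBasis ℝ E
  have hD : D = fun ω => ∑ i, ⟪D ω, b i⟫_ℝ • b i := by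
    ext1 ω
    conv_lhs => rw [← b.sum_repr' (D ω)]
    simp_rw [real_inner_comm (D ω)]
  rw [hD]
  exact Finset.measurable_sum _ fun i _ => (h (b i)).smul_const (b i)

end Measurability

theorem HasGradientAt.norm_le_of_lipschitzWith {E : Type*} [NormedAddCommGroup E]
    [InnerProductSpace ℝ E] [CompleteSpace E] {f : E → ℝ} {G x : E} {K : ℝ≥0}
    (h : HasGradientAt f G x) (hf : LipschitzWith K f) : ‖G‖ ≤ K := by
  simpa using h.hasFDerivAt.le_of_lipschitz hf

theorem HasGradientAt.abs_sub_sub_inner_le {E : Type*} [NormedAddCommGroup E]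
    [InnerProductSpace ℝ E] [CompleteSpace E] {f : E → ℝ} {G x : E} {K : ℝ≥0}
    (h : HasGradientAt f G x) (hf : LipschitzWith K f) (v : E) :
    |f (x + v) - f x - ⟪G, v⟫_ℝ| ≤ 2 * K * ‖v‖ := by
  have h_diff : |f (x + v) - f x| ≤ K * ‖v‖ := by
    simpa [Real.dist_eq] using hf.dist_le_mul (x + v) x
  have h_inner : |⟪G, v⟫_ℝ| ≤ K * ‖v‖ :=
    (abs_real_inner_le_norm G v).trans
      (mul_le_mul_of_nonneg_right (h.norm_le_of_lipschitzWith hf) (norm_nonneg v))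
  linarith [abs_sub (f (x + v) - f x) ⟪G, v⟫_ℝ]

section LocalSlope

variable {E : Type*} [NormedAddCommGroup E]

noncomputable def localSlope (r : E → ℝ) (δ : ℝ) : ℝ :=
  ⨆ v : {v : E // v ≠ 0 ∧ ‖v‖ < δ}, |r v| / ‖(v : E)‖

variable {r : E → ℝ} {L δ : ℝ}

theorem localSlope_nonneg : 0 ≤ localSlope r δ :=
  Real.iSup_nonneg fun _ => by positivity

theorem localSlope_le (hL : 0 ≤ L) (hr : ∀ v, |r v| ≤ L * ‖v‖) : localSlope r δ ≤ L :=
  Real.iSup_le (fun v => (div_le_iff₀ (norm_pos_iff.2 v.2.1)).2 (hr v)) hL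

theorem abs_le_localSlope_mul (hr : ∀ v, |r v| ≤ L * ‖v‖) {v : E} (hv : ‖v‖ < δ) :
    |r v| ≤ localSlope r δ * ‖v‖ := by
  rcases eq_or_ne v 0 with rfl | hv0
  · simpa using hr 0
  have hbdd : BddAbove (Set.range fun w : {w : E // w ≠ 0 ∧ ‖w‖ < δ} => |r w| / ‖(w : E)‖) :=
    ⟨L, Set.forall_mem_range.2 fun w => (div_le_iff₀ (norm_pos_iff.2 w.2.1)).2 (hr w)⟩
  exact (div_le_iff₀ (norm_pos_iff.2 hv0)).1 (le_ciSup hbdd ⟨v, hv0, hv⟩)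

theorem abs_le_localSlope_mul_add (hL : 0 ≤ L) (hr : ∀ v, |r v| ≤ L * ‖v‖) (hδ : 0 < δ) (v : E) :
    |r v| ≤ localSlope r δ * ‖v‖ + L / δ * ‖v‖ ^ 2 := by
  rcases lt_or_ge ‖v‖ δ with hv | hv
  · have : 0 ≤ L / δ * ‖v‖ ^ 2 := by positivity
    linarith [abs_le_localSlope_mul hr hv]
  · have : 0 ≤ localSlope r δ * ‖v‖ := mul_nonneg localSlope_nonneg (norm_nonneg v)
    have : L * ‖v‖ ≤ L / δ * ‖v‖ ^ 2 := by
      rw [div_mul_eq_mul_div, le_div_iff₀ hδ, sq, ← mul_assoc]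
      exact mul_le_mul_of_nonneg_left hv (mul_nonneg hL (norm_nonneg v))
    linarith [hr v]

theorem tendsto_localSlope (hr : r =o[𝓝 0] fun v => v) :
    Tendsto (localSlope r) (𝓝[>] 0) (𝓝 0) := by
  refine tendsto_order.2 ⟨fun a ha => Eventually.of_forall fun _ => ha.trans_le localSlope_nonneg,
    fun ε hε => ?_⟩
  obtain ⟨η, hη, hsmall⟩ := Metric.eventually_nhds_iff.1 (isLittleO_iff.1 hr (half_pos hε))
  filter_upwards [Ioo_mem_nhdsGT hη] with δ hδ
  refine (Real.iSup_le (fun v => (div_le_iff₀ (norm_pos_iff.2 v.2.1)).2 ?_)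
    (by positivity)).trans_lt (half_lt_self hε)
  simpa using hsmall (by simpa using v.2.2.trans hδ.2)

theorem measurable_localSlope [SecondCountableTopology E] {Ω : Type*} [MeasurableSpace Ω]
    {r : Ω → E → ℝ} (hcont : ∀ ω, Continuous (r ω)) (hmeas : ∀ v, Measurable fun ω => r ω v)
    (δ : ℝ) : Measurable fun ω => localSlope (r ω) δ :=
  measurable_iSup_of_continuous
    (fun ω => ((hcont ω).comp continuous_subtype_val).abs.div
      (continuous_norm.comp continuous_subtype_val) fun w => norm_ne_zero_iff.2 w.2.1)
    fun w => (hmeas w).abs.div_const _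

end LocalSlope

section L2

variable {Ω : Type*} [MeasurableSpace Ω] {μ : Measure Ω}

theorem integral_mul_le_sqrt_mul_sqrt {f g : Ω → ℝ} (hf0 : 0 ≤ᵐ[μ] f) (hg0 : 0 ≤ᵐ[μ] g)
    (hf : MemLp f 2 μ) (hg : MemLp g 2 μ) :
    ∫ ω, f ω * g ω ∂μ ≤ √(∫ ω, f ω ^ 2 ∂μ) * √(∫ ω, g ω ^ 2 ∂μ) := by
  have := integral_mul_le_Lp_mul_Lq_of_nonneg Real.HolderConjugate.two_two hf0 hg0
    (by simpa using hf) (by simpa using hg)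
  simpa [Real.sqrt_eq_rpow] using this

variable {E : Type*} [NormedAddCommGroup E] [InnerProductSpace ℝ E]

theorem MeasureTheory.Lp.integral_norm_sq_eq (d : Lp E 2 μ) : ∫ ω, ‖d ω‖ ^ 2 ∂μ = ‖d‖ ^ 2 := by
  simp_rw [← real_inner_self_eq_norm_sq]
  exact (L2.inner_def d d).symm

theorem isLittleO_integral_comp_Lp [IsFiniteMeasure μ] [SecondCountableTopology E]
    {r : Ω → E → ℝ} {L : ℝ} (hL : 0 ≤ L) (hr_le : ∀ ω v, |r ω v| ≤ L * ‖v‖)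
    (hr_cont : ∀ ω, Continuous (r ω)) (hr_meas : ∀ v, Measurable fun ω => r ω v)
    (hr_o : ∀ ω, r ω =o[𝓝 0] fun v => v) :
    (fun d : Lp E 2 μ => ∫ ω, r ω (d ω) ∂μ) =o[𝓝 0] fun d => d := by
  set m : ℝ → Ω → ℝ := fun δ ω => localSlope (r ω) δ
  have hm_meas : ∀ δ, Measurable (m δ) := measurable_localSlope hr_cont hr_meas
  have hm_le : ∀ δ ω, ‖m δ ω‖ ≤ L := fun δ ω => by
    rw [Real.norm_of_nonneg localSlope_nonneg]
    exact localSlope_le hL (hr_le ω)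
  have hm_small : Tendsto (fun δ => √(∫ ω, m δ ω ^ 2 ∂μ)) (𝓝[>] 0) (𝓝 0) := by
    have := tendsto_integral_filter_of_dominated_convergence (μ := μ) (fun _ => L ^ 2)
      (Eventually.of_forall fun δ => ((hm_meas δ).pow_const 2).aestronglyMeasurable)
      (Eventually.of_forall fun δ => ae_of_all _ fun ω => by
        rw [norm_pow]; exact pow_le_pow_left₀ (norm_nonneg _) (hm_le δ ω) 2)
      (integrable_const _) (ae_of_all _ fun ω => (tendsto_localSlope (hr_o ω)).pow 2)
    simpa using this.sqrt
  rw [isLittleO_iff]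
  intro ε hε
  obtain ⟨δ, hδ_small, hδ⟩ :=
    ((hm_small.eventually (gt_mem_nhds (half_pos hε))).and self_mem_nhdsWithin).exists
  have hquad : ∀ᶠ d : Lp E 2 μ in 𝓝 0, L / δ * ‖d‖ < ε / 2 := by
    exact ((continuous_const.mul continuous_norm).tendsto' (0 : Lp E 2 μ) 0 (by simp)).eventually
      (gt_mem_nhds (half_pos hε))
  filter_upwards [hquad] with d hd
  have hd_norm : MemLp (fun ω => ‖d ω‖) 2 μ := (Lp.memLp d).norm
  have hm_int : Integrable (fun ω => m δ ω * ‖d ω‖) μ :=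
    (hd_norm.integrable one_le_two).bdd_mul (hm_meas δ).aestronglyMeasurable
      (ae_of_all _ (hm_le δ))
  have hd_sq_int : Integrable (fun ω => L / δ * ‖d ω‖ ^ 2) μ :=
    hd_norm.integrable_sq.const_mul _
  have hCS : ∫ ω, m δ ω * ‖d ω‖ ∂μ ≤ √(∫ ω, m δ ω ^ 2 ∂μ) * ‖d‖ := by
    simpa [Lp.integral_norm_sq_eq] using integral_mul_le_sqrt_mul_sqrt
      (ae_of_all _ fun ω => localSlope_nonneg) (ae_of_all _ fun ω => norm_nonneg (d ω))
      (MemLp.of_bound (hm_meas δ).aestronglyMeasurable L (ae_of_all _ (hm_le δ))) hd_norm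
  calc ‖∫ ω, r ω (d ω) ∂μ‖
      ≤ ∫ ω, ‖r ω (d ω)‖ ∂μ := norm_integral_le_integral_norm _
    _ ≤ ∫ ω, (m δ ω * ‖d ω‖ + L / δ * ‖d ω‖ ^ 2) ∂μ :=
        integral_mono_of_nonneg (ae_of_all _ fun _ => norm_nonneg _) (hm_int.add hd_sq_int)
          (ae_of_all _ fun ω => abs_le_localSlope_mul_add hL (hr_le ω) hδ (d ω))
    _ = ∫ ω, m δ ω * ‖d ω‖ ∂μ + L / δ * ‖d‖ * ‖d‖ := by
        rw [integral_add hm_int hd_sq_int, integral_const_mul, Lp.integral_norm_sq_eq, mul_assoc,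
          sq]
    _ ≤ ε / 2 * ‖d‖ + ε / 2 * ‖d‖ := by gcongr; exact hCS.trans (by gcongr)
    _ = ε * ‖d‖ := by ring

end L2

section Nemytskii

variable {Ω : Type*} [MeasurableSpace Ω] {μ : Measure Ω} {E : Type*} [NormedAddCommGroup E]
  [InnerProductSpace ℝ E] [FiniteDimensional ℝ E] [MeasurableSpace E] [BorelSpace E]
  {f : E → Ω → ℝ} {K : ℝ≥0}

theorem memLp_two_of_hasGradientAt [IsFiniteMeasure μ]
    (hf_meas : Measurable (Function.uncurry f)) (hf_lip : ∀ ω, LipschitzWith K (f · ω))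
    {x : Ω → E} (hx : Measurable x) {D : Ω → E} (hD : ∀ ω, HasGradientAt (f · ω) (D ω) (x ω)) :
    MemLp D 2 μ :=
  MemLp.of_bound (measurable_of_measurable_inner
      (measurable_inner_of_hasGradientAt hf_meas hx hD)).aestronglyMeasurable
    K (ae_of_all _ fun ω => (hD ω).norm_le_of_lipschitzWith (hf_lip ω))

theorem hasFDerivAt_integral_comp_Lp [IsFiniteMeasure μ]
    (hf_meas : Measurable (Function.uncurry f)) {M : ℝ} (hf_bdd : ∀ x ω, |f x ω| ≤ M)
    (hf_lip : ∀ ω, LipschitzWith K (f · ω))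
    {φ : Lp E 2 μ} {D : Ω → E} (hD : ∀ ω, HasGradientAt (f · ω) (D ω) (φ ω)) {G : Lp E 2 μ}
    (hG : G =ᵐ[μ] D) :
    HasFDerivAt (fun ψ : Lp E 2 μ => ∫ ω, f (ψ ω) ω ∂μ) (innerSL ℝ G) φ := by
  have hφ : Measurable (φ : Ω → E) := (Lp.stronglyMeasurable φ).measurable
  have hf_int : ∀ ψ : Ω → E, Measurable ψ → Integrable (fun ω => f (ψ ω) ω) μ := fun ψ hψ =>
    .of_bound (hf_meas.comp (hψ.prodMk measurable_id)).aestronglyMeasurable M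
      (ae_of_all _ fun ω => hf_bdd (ψ ω) ω)
  set r : Ω → E → ℝ := fun ω v => f (φ ω + v) ω - f (φ ω) ω - ⟪D ω, v⟫_ℝ
  have hr_eq : ∀ d : Lp E 2 μ,
      ∫ ω, f ((φ + d) ω) ω ∂μ - ∫ ω, f (φ ω) ω ∂μ - innerSL ℝ G d = ∫ ω, r ω (d ω) ∂μ := by
    intro d
    have hd : Measurable (d : Ω → E) := (Lp.stronglyMeasurable d).measurable
    have h_add : ∫ ω, f ((φ + d) ω) ω ∂μ = ∫ ω, f (φ ω + d ω) ω ∂μ :=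
      integral_congr_ae (by filter_upwards [Lp.coeFn_add φ d] with ω h; rw [h, Pi.add_apply])
    have h_inner : innerSL ℝ G d = ∫ ω, ⟪D ω, d ω⟫_ℝ ∂μ :=
      (L2.inner_def G d).trans (integral_congr_ae (by filter_upwards [hG] with ω h; rw [h]))
    have h_inner_int : Integrable (fun ω => ⟪D ω, d ω⟫_ℝ) μ :=
      (L2.integrable_inner (𝕜 := ℝ) G d).congr (by filter_upwards [hG] with ω h; rw [h])
    have h_shift_int := hf_int (fun ω => φ ω + d ω) (hφ.add hd)
    rw [h_add, h_inner, ← integral_sub h_shift_int (hf_int _ hφ), ← integral_sub _ h_inner_int]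
    exact h_shift_int.sub (hf_int _ hφ)
  rw [hasFDerivAt_iff_isLittleO_nhds_zero]
  refine (isLittleO_integral_comp_Lp (L := 2 * K) (by positivity)
    (fun ω => (hD ω).abs_sub_sub_inner_le (hf_lip ω)) (fun ω => ?_) (fun v => ?_)
    (fun ω => ?_)).congr_left fun d => (hr_eq d).symm
  · exact (((hf_lip ω).continuous.comp (continuous_const_add _)).sub continuous_const).sub
      (continuous_const.inner continuous_id)
  · exact ((hf_meas.comp ((hφ.add_const v).prodMk measurable_id)).sub
      (hf_meas.comp (hφ.prodMk measurable_id))).sub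
      (measurable_inner_of_hasGradientAt hf_meas hφ hD v)
  · simpa using hasFDerivAt_iff_isLittleO_nhds_zero.1 (hD ω).hasFDerivAt

end Nemytskii

theorem stmt7_general {n : ℕ} {Ω : Type*} [MeasurableSpace Ω] (μ : Measure Ω)
    [IsProbabilityMeasure μ]
    (g : EuclideanSpace ℝ (Fin n) → Ω → ℝ)
    (hg_meas : Measurable (Function.uncurry g))
    (M kg : ℝ)
    (hg_bdd : ∀ x ω, |g x ω| ≤ M)
    (hg_lip : ∀ x x' ω, |g x ω - g x' ω| ≤ kg * ‖x - x'‖)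
    -- `Dg x ω = ∇_x g(x,ω)`
    (Dg : EuclideanSpace ℝ (Fin n) → Ω → EuclideanSpace ℝ (Fin n))
    (hDg : ∀ x ω, HasGradientAt (fun y => g y ω) (Dg x ω) x)
    (φ : Lp (EuclideanSpace ℝ (Fin n)) 2 μ) :
    ∃ G : Lp (EuclideanSpace ℝ (Fin n)) 2 μ,
      (∀ᵐ ω ∂μ, G ω = Dg (φ ω) ω) ∧
      HasFDerivAt (fun ψ : Lp (EuclideanSpace ℝ (Fin n)) 2 μ => ∫ ω, g (ψ ω) ω ∂μ)
        (innerSL ℝ G) φ := by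
  have hg_lip' : ∀ ω, LipschitzWith kg.toNNReal (g · ω) := fun ω =>
    LipschitzWith.of_dist_le_mul fun x x' => by
      rw [Real.dist_eq, dist_eq_norm]
      exact (hg_lip x x' ω).trans (by gcongr; exact Real.le_coe_toNNReal kg)
  have hD : MemLp (fun ω => Dg (φ ω) ω) 2 μ := memLp_two_of_hasGradientAt hg_meas hg_lip'
    (Lp.stronglyMeasurable φ).measurable fun ω => hDg _ ω
  exact ⟨hD.toLp _, hD.coeFn_toLp,
    hasFDerivAt_integral_comp_Lp hg_meas hg_bdd hg_lip' (fun ω => hDg _ ω) hD.coeFn_toLp⟩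

/-- Fréchet differentiability of the reduced cost functional
`𝒥(φ) = ∫_Ω g(φ(ω),ω) dμ` on `L²(μ,Ω;ℝⁿ)`, whose derivative has Riesz representative
`ω ↦ ∇_x g(φ(ω),ω) ∈ L²(μ,Ω;ℝⁿ)`. -/
theorem stmt7 {n : ℕ} {Ω : Type*} [MeasurableSpace Ω] (μ : Measure Ω)
    [IsProbabilityMeasure μ]
    (g : EuclideanSpace ℝ (Fin n) → Ω → ℝ)
    (hg_meas : Measurable (Function.uncurry g))
    (M kg : ℝ) (hM : 0 < M) (hkg : 1 ≤ kg)
    (hg_bdd : ∀ x ω, |g x ω| ≤ M)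
    (hg_lip : ∀ x x' ω, |g x ω - g x' ω| ≤ kg * ‖x - x'‖)
    -- `Dg x ω = ∇_x g(x,ω)`
    (Dg : EuclideanSpace ℝ (Fin n) → Ω → EuclideanSpace ℝ (Fin n))
    (hDg : ∀ x ω, HasGradientAt (fun y => g y ω) (Dg x ω) x)
    (hDg_cont : ∀ ω, Continuous fun x => Dg x ω)
    (φ : Lp (EuclideanSpace ℝ (Fin n)) 2 μ) :
    ∃ G : Lp (EuclideanSpace ℝ (Fin n)) 2 μ,
      (∀ᵐ ω ∂μ, G ω = Dg (φ ω) ω) ∧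
      HasFDerivAt (fun ψ : Lp (EuclideanSpace ℝ (Fin n)) 2 μ => ∫ ω, g (ψ ω) ω ∂μ)
        (innerSL ℝ G) φ :=
  stmt7_general μ g hg_meas M kg hg_bdd hg_lip Dg hDg φ
end
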